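/- arXiv:0906.3129 — 4 statements merged into one kernel-verified Lean document; each statement's English description precedes it below -/
import Mathlib

section
/- (Frobenius determinant formula) Let G be a finite abelian group of order n with elements g₁,…,g_n, and let f : G → ℂ be any function. Then ∏_{χ ∈ Ĝ} (∑_{g ∈ G} χ(g) f(g)) = det( f(g_i g_j^{-1}) )_{i,j=1,…,n}, where the product runs over all characters χ of G. -/
open scoped BigOperators

/-- Frobenius determinant formula: for a finite abelian group `G` and any `f : G → ℂ`,
the product over all characters `χ` of `G` of `∑_{g ∈ G} χ(g) f(g)` equals the
determinant of the `|G| × |G|` matrix `(f (g_i g_j⁻¹))`, here indexed by `G` itself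
(the value of the determinant does not depend on the chosen enumeration of `G`). -/
theorem frobenius_determinant (G : Type) [CommGroup G] [Fintype G] [DecidableEq G]
    (f : G → ℂ) :
    (∏ᶠ χ : G →* ℂˣ, ∑ g : G, (χ g : ℂ) * f g) =
      Matrix.det (Matrix.of fun i j : G => f (i * j⁻¹)) := by
  classical
  have hne : NeZero (Monoid.exponent G) := ⟨Monoid.exponent_ne_zero_of_finite⟩
  obtain ⟨e⟩ := CommGroup.monoidHom_mulEquiv_of_hasEnoughRootsOfUnity G ℂ
  haveI : Fintype (G →* ℂˣ) := Fintype.ofEquiv G e.toEquiv.symm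
  rw [finprod_eq_prod_of_fintype]
  set M : Matrix G G ℂ := Matrix.of fun i j : G => f (i * j⁻¹) with hM
  set U : Matrix G G ℂ := Matrix.of fun i j : G => ((e.symm i : G →* ℂˣ) j : ℂ) with hU
  set d : G → ℂ := fun i => ∑ g : G, ((e.symm i : G →* ℂˣ) g : ℂ) * f g with hd
  have key : U * M = Matrix.diagonal d * U := by
    ext i j
    rw [Matrix.diagonal_mul, Matrix.mul_apply]
    have : ∀ k : G, U i k * M k j
        = ((e.symm i : G →* ℂˣ) k : ℂ) * f (k * j⁻¹) := fun k => rfl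
    simp only [this]
    rw [← Fintype.sum_equiv (Equiv.mulRight j)
      (fun k => ((e.symm i : G →* ℂˣ) k : ℂ) * f k * ((e.symm i : G →* ℂˣ) j : ℂ))
      (fun k => ((e.symm i : G →* ℂˣ) k : ℂ) * f (k * j⁻¹)) ?_, ← Finset.sum_mul]
    · rfl
    · intro k
      simp only [Equiv.coe_mulRight, map_mul, Units.val_mul, mul_inv_cancel_right]
      ring
  have hUnit : IsUnit U := by
    rw [← Matrix.linearIndependent_rows_iff_isUnit]
    have h := linearIndependent_monoidHom G ℂ
    have hcomp : (fun i : G => (U i : G → ℂ))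
        = (fun φ : G →* ℂ => (φ : G → ℂ)) ∘
          (fun i : G => (Units.coeHom ℂ).comp (e.symm i : G →* ℂˣ)) := rfl
    rw [show U.row = _ from hcomp]
    refine h.comp _ ?_
    intro a b hab
    apply e.symm.injective
    ext g
    exact DFunLike.congr_fun hab g
  have hUdet : U.det ≠ 0 := by
    have := (Matrix.isUnit_iff_isUnit_det U).mp hUnit
    exact this.ne_zero
  have hdet := congrArg Matrix.det key
  rw [Matrix.det_mul, Matrix.det_mul, Matrix.det_diagonal] at hdet
  have hMdet : M.det = ∏ i : G, d i :=
    mul_left_cancel₀ hUdet (hdet.trans (by ring))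
  rw [hMdet]
  exact (Equiv.prod_comp e.toEquiv.symm
    (fun χ : G →* ℂˣ => ∑ g : G, (χ g : ℂ) * f g)).symm
end

section
/- With the notation of the determinant matrix D_m^{(−)}(X) = ∏_{λ ≠ 1} D_m^{(λ)}(X) (product over nontrivial characters λ of 𝔽_q^×), write det D_m^{(−)}(X) = 1 + a₁X + a₂X² + ⋯ . If deg m > 1 then a₁ = 0. -/
open scoped BigOperators

/-- For `m ∈ 𝔽_q[T]` monic with `deg m > 1`, writing
`det D_m^{(−)}(X) = 1 + a₁X + a₂X² + ⋯` (where
`D_m^{(−)}(X) = ∏_{λ≠1} D_m^{(λ)}(X)`, so that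
`det D_m^{(−)}(X) = ∏_{λ≠1} det D_m^{(λ)}(X)`), one has `a₁ = 0`. -/
theorem coeff_one_eq_zero (q : ℕ) (F : Type) [Field F] [Fintype F]
    (hq : Fintype.card F = q)
    (m : Polynomial F) (hm : m.Monic) (hd : 1 < m.natDegree)
    (φ : Fˣ →* (Polynomial F ⧸ Ideal.span {m})ˣ)
    (hφ : φ = Units.map ((Ideal.Quotient.mk (Ideal.span {m})).comp Polynomial.C).toMonoidHom)
    (Deg : (Polynomial F ⧸ Ideal.span {m})ˣ → ℕ)
    (L : (Polynomial F ⧸ Ideal.span {m})ˣ → Fˣ)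
    (hrep : ∀ (α : (Polynomial F ⧸ Ideal.span {m})ˣ) (r : Polynomial F),
      r.degree < m.degree →
      Ideal.Quotient.mk (Ideal.span {m}) r = (α : Polynomial F ⧸ Ideal.span {m}) →
      Deg α = r.natDegree ∧ (L α : F) = r.leadingCoeff)
    (N : ℕ) (hN : N = Nat.card ((Polynomial F ⧸ Ideal.span {m})ˣ) / (q - 1))
    (α : Fin N → (Polynomial F ⧸ Ideal.span {m})ˣ)
    (hL1 : ∀ i, L (α i) = 1)
    (hdist : Function.Injective fun i =>
      (QuotientGroup.mk (α i) : (Polynomial F ⧸ Ideal.span {m})ˣ ⧸ φ.range))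
    (hcomp : ∀ β : (Polynomial F ⧸ Ideal.span {m})ˣ, ∃ i,
      (QuotientGroup.mk β : (Polynomial F ⧸ Ideal.span {m})ˣ ⧸ φ.range) = QuotientGroup.mk (α i)) :
    (∏ᶠ (l : Fˣ →* ℂˣ) (_ : l ≠ 1),
      Matrix.det (Matrix.of fun i j : Fin N =>
        Polynomial.C (((l (L (α i * (α j)⁻¹)))⁻¹ : ℂˣ) : ℂ) *
          Polynomial.X ^ Deg (α i * (α j)⁻¹))).coeff 1 = 0 := by
  classical
  have hm0 : m ≠ 0 := hm.ne_zero
  have hIne : Ideal.span {m} ≠ ⊤ := by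
    intro htop
    rw [Ideal.span_singleton_eq_top] at htop
    have hu := htop
    have := Polynomial.natDegree_eq_zero_of_isUnit hu
    omega
  haveI : Nontrivial (Polynomial F ⧸ Ideal.span {m}) := Ideal.Quotient.nontrivial_iff.mpr hIne
  have hdm : (0 : WithBot ℕ) < m.degree := by
    rw [Polynomial.degree_eq_natDegree hm0]
    exact_mod_cast Nat.lt_of_lt_of_le Nat.one_pos (le_of_lt hd)
  -- diagonal: Deg 1 = 0 and L 1 = 1
  have hdiag := hrep 1 1 (by simpa [Polynomial.degree_one] using hdm)
    (by simp)
  have hDeg1 : Deg 1 = 0 := by simpa using hdiag.1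
  have hL1' : L 1 = 1 := by
    ext
    simpa using hdiag.2
  -- off-diagonal: Deg (α i * (α j)⁻¹) ≥ 1
  have hDeg : ∀ i j : Fin N, i ≠ j → 1 ≤ Deg (α i * (α j)⁻¹) := by
    intro i j hij
    set β : (Polynomial F ⧸ Ideal.span {m})ˣ := α i * (α j)⁻¹ with hβ
    obtain ⟨p, hp⟩ := Ideal.Quotient.mk_surjective (I := Ideal.span {m})
      (β : Polynomial F ⧸ Ideal.span {m})
    set r : Polynomial F := p %ₘ m with hr
    have hrad : Ideal.Quotient.mk (Ideal.span {m}) r = (β : Polynomial F ⧸ Ideal.span {m}) := by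
      have : Ideal.Quotient.mk (Ideal.span {m}) (m * (p /ₘ m)) = 0 := by
        rw [Ideal.Quotient.eq_zero_iff_mem]
        exact Ideal.mul_mem_right _ _ (Ideal.subset_span (Set.mem_singleton m))
      rw [hr, Polynomial.modByMonic_eq_sub_mul_div p m, map_sub, this, sub_zero, hp]
    have hrd : r.degree < m.degree := Polynomial.degree_modByMonic_lt p hm
    have hDegβ : Deg β = r.natDegree := (hrep β r hrd hrad).1
    by_contra hcon
    push_neg at hcon
    interval_cases h : Deg β
    -- Deg β = 0, so r is a nonzero constant and β ∈ φ.range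
    have hrn : r.natDegree = 0 := by omega
    have hrC : r = Polynomial.C (r.coeff 0) := Polynomial.eq_C_of_natDegree_eq_zero hrn
    have hrne : r ≠ 0 := by
      intro h0
      have : (β : Polynomial F ⧸ Ideal.span {m}) = 0 := by rw [← hrad, h0, map_zero]
      exact Units.ne_zero β this
    have hc0 : r.coeff 0 ≠ 0 := by
      intro h0
      apply hrne
      rw [hrC, h0, map_zero]
    have hmem : β ∈ φ.range := by
      refine ⟨Units.mk0 (r.coeff 0) hc0, ?_⟩
      ext
      rw [hφ]
      show Ideal.Quotient.mk (Ideal.span {m}) (Polynomial.C (r.coeff 0)) = _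
      rw [← hrC, hrad]
    have : (QuotientGroup.mk (α j) : (Polynomial F ⧸ Ideal.span {m})ˣ ⧸ φ.range)
        = QuotientGroup.mk (α i) := by
      rw [QuotientGroup.eq]
      have : (α j)⁻¹ * α i = β := by rw [hβ]; exact mul_comm ((α j)⁻¹) (α i)
      rw [this]
      exact hmem
    exact hij (hdist this.symm)
  -- each determinant has coefficient of X equal to 0
  have key : ∀ l : Fˣ →* ℂˣ,
      (Matrix.det (Matrix.of fun i j : Fin N =>
        Polynomial.C (((l (L (α i * (α j)⁻¹)))⁻¹ : ℂˣ) : ℂ) *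
          Polynomial.X ^ Deg (α i * (α j)⁻¹))).coeff 1 = 0 := by
    intro l
    rw [Matrix.det_apply, Polynomial.finset_sum_coeff]
    apply Finset.sum_eq_zero
    intro σ _
    rw [Polynomial.coeff_smul]
    rcases eq_or_ne σ 1 with h1 | h1
    · subst h1
      have hprod : (∏ i : Fin N, (Matrix.of fun i j : Fin N =>
          Polynomial.C (((l (L (α i * (α j)⁻¹)))⁻¹ : ℂˣ) : ℂ) *
            Polynomial.X ^ Deg (α i * (α j)⁻¹)) ((1 : Equiv.Perm (Fin N)) i) i) = 1 := by
        apply Finset.prod_eq_one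
        intro i _
        simp [Matrix.of_apply, mul_inv_cancel, hDeg1, hL1']
      rw [hprod]
      simp [Polynomial.coeff_one]
    · -- σ ≠ 1 : find two moved points
      have hex : ∃ i, σ i ≠ i := by
        by_contra hcon
        push_neg at hcon
        exact h1 (Equiv.ext fun x => hcon x)
      obtain ⟨i, hi⟩ := hex
      set j : Fin N := σ⁻¹ i with hj
      have hσj : σ j = i := σ.apply_symm_apply i
      have hji : j ≠ i := by
        intro h
        rw [h] at hσj
        exact hi hσj
      have hjm : σ j ≠ j := by
        intro h
        rw [hσj] at h
        exact hji h.symm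
      have hdvd : (Polynomial.X : Polynomial ℂ) ^ 2 ∣
          ∏ k : Fin N, (Matrix.of fun i j : Fin N =>
            Polynomial.C (((l (L (α i * (α j)⁻¹)))⁻¹ : ℂˣ) : ℂ) *
              Polynomial.X ^ Deg (α i * (α j)⁻¹)) (σ k) k := by
        have hXe : ∀ k : Fin N, σ k ≠ k → (Polynomial.X : Polynomial ℂ) ∣
            (Matrix.of fun i j : Fin N =>
              Polynomial.C (((l (L (α i * (α j)⁻¹)))⁻¹ : ℂˣ) : ℂ) *
                Polynomial.X ^ Deg (α i * (α j)⁻¹)) (σ k) k := by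
          intro k hk
          have h1le : 1 ≤ Deg (α (σ k) * (α k)⁻¹) := hDeg _ _ hk
          exact Dvd.dvd.mul_left (dvd_pow (dvd_refl _) (by omega)) _
        have hsub : ({i, j} : Finset (Fin N)) ⊆ Finset.univ := Finset.subset_univ _
        have hpair : ∏ k ∈ ({i, j} : Finset (Fin N)), (Matrix.of fun i j : Fin N =>
            Polynomial.C (((l (L (α i * (α j)⁻¹)))⁻¹ : ℂˣ) : ℂ) *
              Polynomial.X ^ Deg (α i * (α j)⁻¹)) (σ k) k = _ :=
          Finset.prod_pair hji.symm
        calc (Polynomial.X : Polynomial ℂ) ^ 2 = Polynomial.X * Polynomial.X := sq Polynomial.X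
          _ ∣ ∏ k ∈ ({i, j} : Finset (Fin N)), (Matrix.of fun i j : Fin N =>
              Polynomial.C (((l (L (α i * (α j)⁻¹)))⁻¹ : ℂˣ) : ℂ) *
                Polynomial.X ^ Deg (α i * (α j)⁻¹)) (σ k) k := by
              rw [hpair]
              exact mul_dvd_mul (hXe i hi) (hXe j hjm)
          _ ∣ _ := Finset.prod_dvd_prod_of_subset _ _ _ hsub
      obtain ⟨s, hs⟩ := hdvd
      rw [hs, mul_comm, Polynomial.coeff_mul_X_pow']
      simp
  -- assemble via finprod_induction
  refine finprod_induction (fun P : Polynomial ℂ => P.coeff 1 = 0)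
    (by simp [Polynomial.coeff_one]) ?_ ?_
  · intro x y hx hy
    rw [Polynomial.coeff_mul, Finset.Nat.sum_antidiagonal_eq_sum_range_succ_mk]
    simp [Finset.sum_range_succ, hx, hy]
  · intro l
    rw [finprod_eq_if]
    split
    · exact key l
    · simp [Polynomial.coeff_one]
end

section
/- With the notation of D_m^{(−)}(X) and its expansion det D_m^{(−)}(X) = 1 + a₁X + a₂X² + ⋯ : if deg m > 2 then a₂ = 0. -/
open Polynomial

def Qp (P : Polynomial ℂ) : Prop := P.coeff 0 = 1 ∧ P.coeff 1 = 0 ∧ P.coeff 2 = 0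

lemma Qp_one : Qp 1 :=
  ⟨by simp, by simp [Polynomial.coeff_one], by simp [Polynomial.coeff_one]⟩

lemma Qp_mul {P R : Polynomial ℂ} (hP : Qp P) (hR : Qp R) : Qp (P * R) := by
  obtain ⟨p0, p1, p2⟩ := hP
  obtain ⟨r0, r1, r2⟩ := hR
  refine ⟨?_, ?_, ?_⟩ <;>
    simp [Polynomial.coeff_mul, Finset.Nat.sum_antidiagonal_eq_sum_range_succ_mk,
      Finset.sum_range_succ, p0, p1, p2, r0, r1, r2]

lemma Qp_finprod {ι : Type*} (g : ι → Polynomial ℂ) (h : ∀ i, Qp (g i)) :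
    Qp (∏ᶠ i, g i) := by
  by_cases hf : (Function.mulSupport g).Finite
  · rw [finprod_eq_prod g hf]
    exact Finset.prod_induction _ Qp (fun a b ha hb => Qp_mul ha hb) Qp_one (fun i _ => h i)
  · rw [finprod_of_infinite_mulSupport hf]
    exact Qp_one

lemma prod_C_mul_X_pow {ι : Type*} (s : Finset ι) (c : ι → ℂ) (e : ι → ℕ) :
    (∏ i ∈ s, (C (c i) * X ^ e i)) = C (∏ i ∈ s, c i) * X ^ (∑ i ∈ s, e i) := by
  rw [Finset.prod_mul_distrib, map_prod, Finset.prod_pow_eq_pow_sum]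

lemma perm_sum_ge {N : ℕ} (d : Fin N → Fin N → ℕ) (hd0 : ∀ i, d i i = 0)
    (h1 : ∀ i j, i ≠ j → 1 ≤ d i j) (h3 : ∀ i j, i ≠ j → 3 ≤ d i j + d j i)
    (σ : Equiv.Perm (Fin N)) (hσ : σ ≠ 1) : 3 ≤ ∑ j, d (σ j) j := by
  classical
  set S : Finset (Fin N) := Finset.univ.filter (fun j => σ j ≠ j) with hS
  have hmem : ∀ j, j ∈ S ↔ σ j ≠ j := by intro j; simp [hS]
  have hclosed : ∀ j ∈ S, σ j ∈ S := by
    intro j hj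
    rw [hmem] at hj ⊢
    intro h
    exact hj (σ.injective h)
  have hsum : ∑ j, d (σ j) j = ∑ j ∈ S, d (σ j) j := by
    rw [← Finset.sum_subset (Finset.subset_univ S)]
    intro x _ hx
    rw [hmem] at hx
    push_neg at hx
    rw [hx, hd0]
  have hterm : ∀ j ∈ S, 1 ≤ d (σ j) j := by
    intro j hj; exact h1 _ _ ((hmem j).1 hj)
  have hcard2 : 2 ≤ S.card := by
    obtain ⟨i, hi⟩ : ∃ i, σ i ≠ i := by
      by_contra h
      push_neg at h
      exact hσ (Equiv.ext h)
    have hiS : i ∈ S := (hmem i).2 hi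
    have hsiS : σ i ∈ S := hclosed i hiS
    exact Finset.one_lt_card.2 ⟨σ i, hsiS, i, hiS, hi⟩
  rcases eq_or_lt_of_le hcard2 with hc2 | hc3
  · obtain ⟨i, j, hij, hSij⟩ := Finset.card_eq_two.1 hc2.symm
    have hiS : i ∈ S := by rw [hSij]; simp
    have hjS : j ∈ S := by rw [hSij]; simp
    have hsi : σ i = j := by
      have := hclosed i hiS
      rw [hSij] at this
      simp at this
      rcases this with h | h
      · exact absurd h ((hmem i).1 hiS)
      · exact h
    have hsj : σ j = i := by
      have := hclosed j hjS
      rw [hSij] at this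
      simp at this
      rcases this with h | h
      · exact h
      · exact absurd h ((hmem j).1 hjS)
    rw [hsum, hSij, Finset.sum_pair hij, hsi, hsj]
    have := h3 i j hij
    omega
  · have : (S.card : ℕ) ≤ ∑ j ∈ S, d (σ j) j := by
      calc S.card = ∑ _j ∈ S, 1 := by simp
      _ ≤ ∑ j ∈ S, d (σ j) j := Finset.sum_le_sum hterm
    omega

lemma det_coeff_good {N : ℕ} (c : Fin N → Fin N → ℂ) (d : Fin N → Fin N → ℕ)
    (hc : ∀ i, c i i = 1) (hd0 : ∀ i, d i i = 0)
    (h1 : ∀ i j, i ≠ j → 1 ≤ d i j) (h3 : ∀ i j, i ≠ j → 3 ≤ d i j + d j i) :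
    Qp (Matrix.det (Matrix.of fun i j : Fin N => C (c i j) * X ^ d i j)) := by
  classical
  have hw : ∀ σ : Equiv.Perm (Fin N), σ ≠ 1 → 3 ≤ ∑ i, d (σ i) i :=
    perm_sum_ge d hd0 h1 h3
  have main : ∀ k : ℕ, k ≤ 2 →
      (Matrix.det (Matrix.of fun i j : Fin N => C (c i j) * X ^ d i j)).coeff k
        = if k = 0 then 1 else 0 := by
    intro k hk
    rw [Matrix.det_apply, Polynomial.finset_sum_coeff]
    simp only [Matrix.of_apply, Polynomial.coeff_smul]
    rw [Finset.sum_eq_single (1 : Equiv.Perm (Fin N))]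
    · simp [prod_C_mul_X_pow, coeff_C_mul, coeff_X_pow, hd0, hc, Polynomial.coeff_one, eq_comm]
    · intro σ _ hσ
      have h3w := hw σ hσ
      rw [prod_C_mul_X_pow, coeff_C_mul, coeff_X_pow, if_neg (by omega), mul_zero, smul_zero]
    · simp
  exact ⟨by simpa using main 0 (by norm_num), by simpa using main 1 (by norm_num),
    by simpa using main 2 (by norm_num)⟩
/-- For `m ∈ 𝔽_q[T]` monic with `deg m > 2`, writing
`det D_m^{(−)}(X) = 1 + a₁X + a₂X² + ⋯` (where
`D_m^{(−)}(X) = ∏_{λ≠1} D_m^{(λ)}(X)`, so that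
`det D_m^{(−)}(X) = ∏_{λ≠1} det D_m^{(λ)}(X)`), one has `a₂ = 0` when `deg m > 2`. -/
theorem coeff_two_eq_zero (q : ℕ) (F : Type) [Field F] [Fintype F]
    (hq : Fintype.card F = q)
    (m : Polynomial F) (hm : m.Monic) (hd : 2 < m.natDegree)
    (φ : Fˣ →* (Polynomial F ⧸ Ideal.span {m})ˣ)
    (hφ : φ = Units.map ((Ideal.Quotient.mk (Ideal.span {m})).comp Polynomial.C).toMonoidHom)
    (Deg : (Polynomial F ⧸ Ideal.span {m})ˣ → ℕ)
    (L : (Polynomial F ⧸ Ideal.span {m})ˣ → Fˣ)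
    (hrep : ∀ (α : (Polynomial F ⧸ Ideal.span {m})ˣ) (r : Polynomial F),
      r.degree < m.degree →
      Ideal.Quotient.mk (Ideal.span {m}) r = (α : Polynomial F ⧸ Ideal.span {m}) →
      Deg α = r.natDegree ∧ (L α : F) = r.leadingCoeff)
    (N : ℕ) (hN : N = Nat.card ((Polynomial F ⧸ Ideal.span {m})ˣ) / (q - 1))
    (α : Fin N → (Polynomial F ⧸ Ideal.span {m})ˣ)
    (hL1 : ∀ i, L (α i) = 1)
    (hdist : Function.Injective fun i =>
      (QuotientGroup.mk (α i) : (Polynomial F ⧸ Ideal.span {m})ˣ ⧸ φ.range))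
    (hcomp : ∀ β : (Polynomial F ⧸ Ideal.span {m})ˣ, ∃ i,
      (QuotientGroup.mk β : (Polynomial F ⧸ Ideal.span {m})ˣ ⧸ φ.range) = QuotientGroup.mk (α i)) :
    (∏ᶠ (l : Fˣ →* ℂˣ) (_ : l ≠ 1),
      Matrix.det (Matrix.of fun i j : Fin N =>
        Polynomial.C (((l (L (α i * (α j)⁻¹)))⁻¹ : ℂˣ) : ℂ) *
          Polynomial.X ^ Deg (α i * (α j)⁻¹))).coeff 2 = 0 := by
  classical
  have hm0 : m ≠ 0 := hm.ne_zero
  -- the quotient ring is nontrivial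
  have hItop : Ideal.span {m} ≠ (⊤ : Ideal (Polynomial F)) := by
    rw [Ne, Ideal.span_singleton_eq_top]
    intro hu
    have := Polynomial.natDegree_eq_zero_of_isUnit hu
    omega
  haveI : Nontrivial (Polynomial F ⧸ Ideal.span {m}) := Ideal.Quotient.nontrivial_iff.mpr hItop
  -- basic facts about the unit 1
  have hdegpos : (0 : WithBot ℕ) < m.degree :=
    Polynomial.natDegree_pos_iff_degree_pos.1 (by omega)
  have hone := hrep 1 1 (by simpa using hdegpos) (by simp)
  have hDeg1 : Deg 1 = 0 := by simpa using hone.1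
  have hL1' : L 1 = 1 := Units.ext (by simpa using hone.2)
  -- every unit has a small-degree representative
  have hrep' : ∀ β : (Polynomial F ⧸ Ideal.span {m})ˣ, ∃ r : Polynomial F,
      r.degree < m.degree ∧
        Ideal.Quotient.mk (Ideal.span {m}) r = (β : Polynomial F ⧸ Ideal.span {m}) := by
    intro β
    obtain ⟨p, hp⟩ := Ideal.Quotient.mk_surjective (β : Polynomial F ⧸ Ideal.span {m})
    refine ⟨p %ₘ m, Polynomial.degree_modByMonic_lt p hm, ?_⟩
    have hmkm : Ideal.Quotient.mk (Ideal.span {m}) m = 0 :=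
      Ideal.Quotient.eq_zero_iff_mem.2 (Ideal.mem_span_singleton_self m)
    have : Ideal.Quotient.mk (Ideal.span {m}) (p %ₘ m)
        = Ideal.Quotient.mk (Ideal.span {m}) p := by
      conv_rhs => rw [← Polynomial.modByMonic_add_div p m]
      rw [map_add, map_mul, hmkm, zero_mul, add_zero]
    rw [this, hp]
  -- off-diagonal degrees are ≥ 1
  have hd1 : ∀ i j : Fin N, i ≠ j → 1 ≤ Deg (α i * (α j)⁻¹) := by
    intro i j hij
    by_contra h
    push_neg at h
    have hD : Deg (α i * (α j)⁻¹) = 0 := by omega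
    obtain ⟨r, hr, hmk⟩ := hrep' (α i * (α j)⁻¹)
    obtain ⟨hDr, -⟩ := hrep _ r hr hmk
    have hrne : r ≠ 0 := by
      intro h0
      rw [h0, map_zero] at hmk
      exact Units.ne_zero (α i * (α j)⁻¹) hmk.symm
    obtain ⟨a, ha⟩ := Polynomial.natDegree_eq_zero.1 (by omega : r.natDegree = 0)
    have hane : a ≠ 0 := by
      intro h0; rw [h0, map_zero] at ha; exact hrne ha.symm
    have hmemrange : α i * (α j)⁻¹ ∈ φ.range := by
      refine ⟨Units.mk0 a hane, ?_⟩
      apply Units.ext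
      rw [hφ]
      simpa using (ha ▸ hmk)
    have heq : (QuotientGroup.mk (α i) : _ ⧸ φ.range) = QuotientGroup.mk (α j) := by
      rw [QuotientGroup.eq]
      have h2 : (α i)⁻¹ * α j = (α i * (α j)⁻¹)⁻¹ := by rw [mul_inv_rev, inv_inv]; exact mul_comm ((α i)⁻¹) (α j)
      rw [h2]
      exact φ.range.inv_mem hmemrange
    exact hij (hdist heq)
  -- key fact: degrees of a pair sum to at least 3
  have hd3 : ∀ i j : Fin N, i ≠ j → 3 ≤ Deg (α i * (α j)⁻¹) + Deg (α j * (α i)⁻¹) := by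
    intro i j hij
    have ha1 := hd1 i j hij
    have hb1 := hd1 j i hij.symm
    by_contra h
    push_neg at h
    have hDa : Deg (α i * (α j)⁻¹) = 1 := by omega
    have hDb : Deg (α j * (α i)⁻¹) = 1 := by omega
    obtain ⟨r, hr, hmkr⟩ := hrep' (α i * (α j)⁻¹)
    obtain ⟨s, hs, hmks⟩ := hrep' (α j * (α i)⁻¹)
    obtain ⟨hDr, -⟩ := hrep _ r hr hmkr
    obtain ⟨hDs, -⟩ := hrep _ s hs hmks
    have hrdeg : r.natDegree = 1 := by omega
    have hsdeg : s.natDegree = 1 := by omega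
    have hr0 : r ≠ 0 := fun h0 => by simp [h0] at hrdeg
    have hs0 : s ≠ 0 := fun h0 => by simp [h0] at hsdeg
    have hmul1 : (α i * (α j)⁻¹) * (α j * (α i)⁻¹) = 1 := by group
    have hmk1 : Ideal.Quotient.mk (Ideal.span {m}) (r * s) = 1 := by
      rw [map_mul, hmkr, hmks, ← Units.val_mul, hmul1, Units.val_one]
    have hdvd : m ∣ r * s - 1 := by
      have : r * s - 1 ∈ Ideal.span {m} := by
        rw [← Ideal.Quotient.eq_zero_iff_mem, map_sub, hmk1, map_one, sub_self]
      rwa [Ideal.mem_span_singleton] at this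
    have hnd : (r * s).natDegree = 2 := by
      rw [Polynomial.natDegree_mul hr0 hs0, hrdeg, hsdeg]
    have hne : r * s - 1 ≠ 0 := by
      intro h0
      rw [sub_eq_zero.1 h0] at hnd
      simp at hnd
    have hle : (r * s - 1).natDegree ≤ 2 := by
      refine le_trans (Polynomial.natDegree_sub_le _ _) ?_
      simp [hnd]
    have := Polynomial.natDegree_le_natDegree (Polynomial.degree_le_of_dvd hdvd hne)
    omega
  -- assemble
  have hdiag0 : ∀ i : Fin N, Deg (α i * (α i)⁻¹) = 0 := by
    intro i; rw [mul_inv_cancel]; exact hDeg1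
  have hdiagc : ∀ (l : Fˣ →* ℂˣ) (i : Fin N),
      (((l (L (α i * (α i)⁻¹)))⁻¹ : ℂˣ) : ℂ) = 1 := by
    intro l i
    rw [mul_inv_cancel, hL1', map_one, inv_one, Units.val_one]
  refine (Qp_finprod _ fun l => ?_).2.2
  rw [finprod_eq_if]
  split
  · exact det_coeff_good _ _ (hdiagc l) hdiag0 hd1 hd3
  · exact Qp_one
end

section
/- Let X be a finite group of Dirichlet characters modulo m over 𝔽_q[T], Q a monic irreducible polynomial, Y = {χ ∈ X : χ(Q) ≠ 0}, Z = {χ ∈ X : χ(Q) = 1}. Then Z ≤ Y ≤ X are subgroups, Y/Z is cyclic (via the map χ ↦ χ(Q)), and ∏_{χ∈X}(1 − χ(Q)X^{deg Q}) = (1 − X^{f·deg Q})^{g} in ℂ[X], where f = |Y/Z| and g = |Z|. -/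
open Polynomial

lemma prod_one_sub_nthRoots (n : ℕ) (hn : 0 < n) (t : Polynomial ℂ) :
    ∏ u ∈ nthRootsFinset n (1 : ℂ), (1 - Polynomial.C u * t) = 1 - t ^ n := by
  have hprim := Complex.isPrimitiveRoot_exp n hn.ne'
  have hX := X_pow_sub_one_eq_prod hn hprim
  have h2 : ∀ s : Polynomial ℂ, ∏ u ∈ nthRootsFinset n (1 : ℂ), (s - Polynomial.C u) = s ^ n - 1 := by
    intro s
    have := congrArg (aeval s) hX
    simpa [map_prod] using this.symm
  have hneg : ∏ u ∈ nthRootsFinset n (1 : ℂ), (-Polynomial.C u) = -1 := by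
    have := h2 0
    simpa [zero_pow hn.ne'] using this
  have hinvmem : ∀ u ∈ nthRootsFinset n (1 : ℂ), u⁻¹ ∈ nthRootsFinset n (1 : ℂ) := by
    intro u hu
    rw [mem_nthRootsFinset hn] at hu ⊢
    rw [inv_pow, hu, inv_one]
  calc ∏ u ∈ nthRootsFinset n (1 : ℂ), (1 - Polynomial.C u * t)
      = ∏ u ∈ nthRootsFinset n (1 : ℂ), (-Polynomial.C u * (t - Polynomial.C u⁻¹)) := by
        refine Finset.prod_congr rfl fun u hu => ?_
        have h0 : u ≠ 0 := ne_zero_of_mem_nthRootsFinset one_ne_zero hu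
        have : (Polynomial.C u : Polynomial ℂ) * Polynomial.C u⁻¹ = 1 := by
          rw [← Polynomial.C_mul, mul_inv_cancel₀ h0, Polynomial.C_1]
        linear_combination -this
    _ = (∏ u ∈ nthRootsFinset n (1 : ℂ), (-Polynomial.C u)) *
          ∏ u ∈ nthRootsFinset n (1 : ℂ), (t - Polynomial.C u⁻¹) := Finset.prod_mul_distrib
    _ = (-1) * ∏ u ∈ nthRootsFinset n (1 : ℂ), (t - Polynomial.C u) := by
        rw [hneg]
        congr 1
        refine Finset.prod_nbij' (fun u => u⁻¹) (fun u => u⁻¹) hinvmem hinvmem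
          (fun u _ => inv_inv u) (fun u _ => inv_inv u) (fun u _ => rfl)
    _ = 1 - t ^ n := by rw [h2]; ring

/-- Abstract form of Theorem 2.1 + Proposition 3.1 of the paper. Let `G` be a finite
group of Dirichlet characters (over `𝔽_q[T]`, modulo `m`) and let `ev χ = χ(Q)` be
evaluation at a monic irreducible polynomial `Q` of degree `d`, extended by zero at the
conductor (so `ev 1 = 1`, `ev` is multiplicative on characters with nonzero value, and
nonzero values are invertible with `ev χ⁻¹ = (ev χ)⁻¹`). Then
`Y = {χ : ev χ ≠ 0}` and `Z = {χ : ev χ = 1}` are subgroups with `Z ≤ Y`, the quotient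
`Y/Z` is cyclic, and `∏_{χ∈G} (1 − ev(χ) X^d) = (1 − X^{f·d})^g` in `ℂ[X]`, where
`f = |Y/Z|` and `g = |Z|`. -/
theorem dirichlet_character_euler_factor (G : Type) [CommGroup G] [Fintype G]
    (ev : G → ℂ) (d : ℕ) (hd : 0 < d)
    (h1 : ev 1 = 1)
    (hmul : ∀ χ ψ : G, ev χ ≠ 0 → ev ψ ≠ 0 → ev (χ * ψ) = ev χ * ev ψ)
    (hinv : ∀ χ : G, ev χ ≠ 0 → ev χ⁻¹ * ev χ = 1) :
    ∃ Y Z : Subgroup G,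
      (Y : Set G) = {χ | ev χ ≠ 0} ∧
      (Z : Set G) = {χ | ev χ = 1} ∧
      Z ≤ Y ∧
      IsCyclic (Y ⧸ Z.subgroupOf Y) ∧
      (∏ χ : G, (1 - Polynomial.C (ev χ) * Polynomial.X ^ d)) =
        (1 - (Polynomial.X : Polynomial ℂ) ^ (Nat.card (Y ⧸ Z.subgroupOf Y) * d)) ^
          Nat.card Z := by
  classical
  -- the subgroups
  set Y : Subgroup G :=
    { carrier := {χ | ev χ ≠ 0}
      one_mem' := by simp [h1]
      mul_mem' := by
        intro a b ha hb
        simp only [Set.mem_setOf_eq] at *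
        rw [hmul a b ha hb]
        exact mul_ne_zero ha hb
      inv_mem' := by
        intro a ha h0
        simp only [Set.mem_setOf_eq] at *
        have := hinv a ha
        rw [h0, zero_mul] at this
        exact zero_ne_one this } with hYdef
  set Z : Subgroup G :=
    { carrier := {χ | ev χ = 1}
      one_mem' := h1
      mul_mem' := by
        intro a b ha hb
        simp only [Set.mem_setOf_eq] at *
        rw [hmul a b (ha ▸ one_ne_zero) (hb ▸ one_ne_zero), ha, hb, one_mul]
      inv_mem' := by
        intro a ha
        simp only [Set.mem_setOf_eq] at *
        have := hinv a (ha ▸ one_ne_zero)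
        rwa [ha, mul_one] at this } with hZdef
  have hYmem : ∀ x : G, x ∈ Y ↔ ev x ≠ 0 := fun x => Iff.rfl
  have hZmem : ∀ x : G, x ∈ Z ↔ ev x = 1 := fun x => Iff.rfl
  have hZY : Z ≤ Y := by
    intro x hx
    rw [hZmem] at hx
    rw [hYmem, hx]
    exact one_ne_zero
  refine ⟨Y, Z, rfl, rfl, hZY, ?_⟩
  -- the evaluation homomorphism on Y
  have hφmul : ∀ a b : Y, ev ((a : G) * b) = ev a * ev b :=
    fun a b => hmul _ _ a.2 b.2
  let φ : Y →* ℂˣ :=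
    { toFun := fun χ => Units.mk0 (ev χ) χ.2
      map_one' := by
        ext
        simpa using h1
      map_mul' := by
        intro a b
        ext
        simpa using hφmul a b }
  have hφval : ∀ χ : Y, ((φ χ : ℂˣ) : ℂ) = ev χ := fun χ => rfl
  -- the induced injective homomorphism on the quotient
  let N := Z.subgroupOf Y
  have hφker : ∀ y : Y, y ∈ N → φ y = 1 := by
    intro y hy
    ext
    simpa [hφval, N, Subgroup.mem_subgroupOf, hZmem] using hy
  let ψ : (Y ⧸ N) →* ℂˣ := QuotientGroup.lift N φ hφker
  have hψmk : ∀ y : Y, ψ (QuotientGroup.mk y) = φ y := fun y => rfl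
  have hψinj : Function.Injective ψ := by
    rw [injective_iff_map_eq_one]
    intro q hq
    induction q using QuotientGroup.induction_on with
    | H y =>
      rw [hψmk] at hq
      rw [QuotientGroup.eq_one_iff]
      have : ev y = 1 := by
        have := congrArg Units.val hq
        simpa [hφval] using this
      exact this
  constructor
  · -- cyclicity
    haveI : Finite (↥ψ.range) := Set.Finite.to_subtype (Set.finite_range ψ)
    exact isCyclic_of_surjective (MonoidHom.ofInjective hψinj).symm
      (MonoidHom.ofInjective hψinj).symm.surjective
  · -- the product formula
    haveI : Fintype (Y ⧸ N) := Fintype.ofFinite _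
    set f := Nat.card (Y ⧸ N) with hf
    have hfpos : 0 < f := Nat.card_pos
    set w : (Y ⧸ N) → ℂ := fun q => ((ψ q : ℂˣ) : ℂ) with hw
    have hwinj : Function.Injective w := fun a b h => hψinj (Units.ext h)
    have hwmk : ∀ y : Y, w (QuotientGroup.mk y) = ev y := fun y => rfl
    have hwmem : ∀ q, w q ∈ nthRootsFinset f (1 : ℂ) := by
      intro q
      rw [mem_nthRootsFinset hfpos]
      have : ψ q ^ f = 1 := by rw [← map_pow, pow_card_eq_one', map_one]
      have := congrArg Units.val this
      simpa [hw] using this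
    -- image of w is the full set of f-th roots of unity
    have hcardroots : (nthRootsFinset f (1 : ℂ)).card = f :=
      (Complex.isPrimitiveRoot_exp f hfpos.ne').card_nthRootsFinset
    have himg : Finset.image w Finset.univ = nthRootsFinset f (1 : ℂ) := by
      apply Finset.eq_of_subset_of_card_le
      · intro u hu
        obtain ⟨q, _, rfl⟩ := Finset.mem_image.1 hu
        exact hwmem q
      · rw [hcardroots, Finset.card_image_of_injective _ hwinj, Finset.card_univ,
          ← Nat.card_eq_fintype_card]
    -- cardinality of fibers
    have hfiber : ∀ q : Y ⧸ N,
        (Finset.univ.filter (fun y : Y => (QuotientGroup.mk y : Y ⧸ N) = q)).card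
          = Nat.card Z := by
      intro q
      have e1 : {y : Y // (QuotientGroup.mk y : Y ⧸ N) = q}
          ≃ ((QuotientGroup.mk : Y → Y ⧸ N) ⁻¹' {q}) :=
        Equiv.subtypeEquivRight (by simp)
      have e2 := QuotientGroup.preimageMkEquivSubgroupProdSet N ({q} : Set (Y ⧸ N))
      have e3 : (N : Type _) ≃ Z := (Subgroup.subgroupOfEquivOfLe hZY).toEquiv
      have : Nat.card {y : Y // (QuotientGroup.mk y : Y ⧸ N) = q} = Nat.card Z := by
        rw [Nat.card_congr (e1.trans e2), Nat.card_prod, Nat.card_congr e3]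
        simp
      rw [← this, Nat.card_eq_fintype_card, Fintype.card_subtype]
    -- now compute
    calc (∏ χ : G, (1 - Polynomial.C (ev χ) * Polynomial.X ^ d))
        = ∏ χ ∈ Finset.univ.filter (fun χ => ev χ ≠ 0),
            (1 - Polynomial.C (ev χ) * Polynomial.X ^ d) := by
          refine (Finset.prod_filter_of_ne ?_).symm
          intro χ _ hne
          by_contra h0
          apply hne
          rw [h0]
          simp
      _ = ∏ χ : Y, (1 - Polynomial.C (ev χ) * Polynomial.X ^ d) := by
          refine Finset.prod_subtype _ (fun x => ?_) _
          simp [hYmem]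
      _ = ∏ q : Y ⧸ N, ∏ y ∈ Finset.univ.filter
            (fun y : Y => (QuotientGroup.mk y : Y ⧸ N) = q),
            (1 - Polynomial.C (ev y) * Polynomial.X ^ d) :=
          (Finset.prod_fiberwise _ _ _).symm
      _ = ∏ q : Y ⧸ N, (1 - Polynomial.C (w q) * Polynomial.X ^ d) ^ Nat.card Z := by
          refine Finset.prod_congr rfl fun q _ => ?_
          rw [← hfiber q, ← Finset.prod_const]
          refine Finset.prod_congr rfl fun y hy => ?_
          rw [Finset.mem_filter] at hy
          rw [← hy.2, hwmk]
      _ = (∏ q : Y ⧸ N, (1 - Polynomial.C (w q) * Polynomial.X ^ d)) ^ Nat.card Z :=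
          Finset.prod_pow _ _ _
      _ = (∏ u ∈ nthRootsFinset f (1 : ℂ), (1 - Polynomial.C u * Polynomial.X ^ d)) ^ Nat.card Z := by
          rw [← himg, Finset.prod_image (fun a _ b _ h => hwinj h)]
      _ = (1 - (Polynomial.X : Polynomial ℂ) ^ (f * d)) ^ Nat.card Z := by
          rw [prod_one_sub_nthRoots f hfpos, ← pow_mul, mul_comm d f]
end
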